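/- For every real x with x < 0 or x > 1, the value r̃(x) is a real number (Im r̃(x) = 0). -/
import Mathlib


open Complex Metric

/-- `w(z) = z·((z−1)/z)^{1/2}` with the principal square root. -/
noncomputable def wfun (z : ℂ) : ℂ := z * ((z - 1) / z) ^ ((1 : ℂ)/2)

/-- `r̃(z) = −Log(2 + (2z−1)/w(z))` with the principal logarithm. -/
noncomputable def rTilde (z : ℂ) : ℂ := -Complex.log (2 + (2 * z - 1) / wfun z)

/-- For real `x` with `x < 0` or `x > 1`, `r̃(x)` is real. -/
theorem stmt_13 (x : ℝ) (hx : x < 0 ∨ 1 < x) : (rTilde x).im = 0 := by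
  set t : ℝ := (x - 1) / x with ht
  have ht0 : 0 < t := by
    rcases hx with h | h
    · exact div_pos_of_neg_of_neg (by linarith) h
    · exact div_pos (by linarith) (by linarith)
  have hcast : ((x : ℂ) - 1) / (x : ℂ) = (t : ℂ) := by
    rw [ht]; push_cast; ring
  have hsqrt : (t : ℂ) ^ ((1 : ℂ)/2) = (Real.sqrt t : ℂ) := by
    rw [show ((1:ℂ)/2) = (((1/2 : ℝ) : ℝ) : ℂ) by norm_num,
      ← Complex.ofReal_cpow ht0.le, Real.sqrt_eq_rpow]
  have hw : wfun x = ((x * Real.sqrt t : ℝ) : ℂ) := by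
    unfold wfun; rw [hcast, hsqrt]; push_cast; ring
  have harg : (2 + (2 * (x : ℂ) - 1) / wfun x)
      = ((2 + (2*x - 1)/(x * Real.sqrt t) : ℝ) : ℂ) := by
    rw [hw]; push_cast; ring
  have hs : 0 < Real.sqrt t := Real.sqrt_pos.mpr ht0
  have hpos : 0 < 2 + (2*x - 1)/(x * Real.sqrt t) := by
    rcases hx with h | h
    · have : 0 < (2*x - 1)/(x * Real.sqrt t) :=
        div_pos_of_neg_of_neg (by linarith) (mul_neg_of_neg_of_pos h hs)
      linarith
    · have : 0 < (2*x - 1)/(x * Real.sqrt t) :=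
        div_pos (by linarith) (mul_pos (by linarith) hs)
      linarith
  rw [rTilde, harg, neg_im, Complex.log_im, Complex.arg_ofReal_of_nonneg hpos.le, neg_zero]
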